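/- The subspace ℋ⁰_ℤ of ℋ_ℤ spanned by 1 and all symbols [s₁,…,s_k] with integer entries satisfying s₁+⋯+s_j > j for all j = 1,…,k is closed under the extended shuffle product ⧢; i.e., (ℋ⁰_ℤ, ⧢) is a unital subalgebra of (ℋ_ℤ, ⧢). -/
import Mathlib


noncomputable section

/-- The vector space ℋ_ℤ with basis the symbols `[s₁,…,s_k]` (lists of integers),
the empty list being the unit `1`. -/
abbrev HZ : Type := List ℤ →₀ ℚ

/-- The basis symbol `[s₁,…,s_k]`. -/
def bs (l : List ℤ) : HZ := Finsupp.single l 1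

/-- Linear extension of a map defined on basis symbols. -/
def hlift (f : List ℤ → HZ) : HZ →ₗ[ℚ] HZ := Finsupp.lift HZ ℚ (List ℤ) f

/-- Prepending a `0` entry to every basis symbol. -/
def preZ : HZ →ₗ[ℚ] HZ := hlift fun l => bs (0 :: l)

/-- The operator `I` adding 1 to the first entry. -/
def Imap : HZ →ₗ[ℚ] HZ := hlift fun l =>
  match l with
  | [] => 0
  | s :: r => bs ((s + 1) :: r)

/-- The operator `J` subtracting 1 from the first entry, with `J(1) = 0`. -/
def Jmap : HZ →ₗ[ℚ] HZ := hlift fun l =>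
  match l with
  | [] => 0
  | s :: r => bs ((s - 1) :: r)

/-- The five-case recursion defining the extended shuffle product on ℋ_ℤ. -/
def IsExtShuffle (m : HZ →ₗ[ℚ] HZ →ₗ[ℚ] HZ) : Prop :=
  (∀ x, m (bs []) x = x) ∧
  (∀ x, m x (bs []) = x) ∧
  (∀ (s' : List ℤ) (t₁ : ℤ) (t' : List ℤ),
    m (bs (0 :: s')) (bs (t₁ :: t')) = preZ (m (bs s') (bs (t₁ :: t')))) ∧
  (∀ (s₁ : ℤ), 0 < s₁ → ∀ (s' t' : List ℤ),
    m (bs (s₁ :: s')) (bs (0 :: t')) = preZ (m (bs (s₁ :: s')) (bs t'))) ∧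
  (∀ (s₁ t₁ : ℤ), 0 < s₁ → 0 < t₁ → ∀ (s' t' : List ℤ),
    m (bs (s₁ :: s')) (bs (t₁ :: t')) =
      Imap (m (bs (s₁ :: s')) (bs ((t₁ - 1) :: t'))) +
      Imap (m (bs ((s₁ - 1) :: s')) (bs (t₁ :: t')))) ∧
  (∀ (s₁ t₁ : ℤ), 0 < s₁ → t₁ < 0 → ∀ (s' t' : List ℤ),
    m (bs (s₁ :: s')) (bs (t₁ :: t')) =
      Jmap (m (bs (s₁ :: s')) (bs ((t₁ + 1) :: t'))) -
      m (bs ((s₁ - 1) :: s')) (bs ((t₁ + 1) :: t'))) ∧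
  (∀ (s₁ : ℤ), s₁ < 0 → ∀ (t₁ : ℤ) (s' t' : List ℤ),
    m (bs (s₁ :: s')) (bs (t₁ :: t')) =
      Jmap (m (bs ((s₁ + 1) :: s')) (bs (t₁ :: t'))) -
      m (bs ((s₁ + 1) :: s')) (bs ((t₁ - 1) :: t')))

/-- The subspace of ℋ_ℤ spanned by `1` and the symbols `[s₁,…,s_k]` with `s₁+⋯+s_j > j` for
all `j = 1,…,k` (the convergent integer points). -/
def Hconv : Submodule ℚ HZ :=
  Submodule.span ℚ
    {x : HZ | ∃ l : List ℤ,
      (∀ j : ℕ, 1 ≤ j → j ≤ l.length → (j : ℤ) < (l.take j).sum) ∧ x = bs l}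

/- ===== auxiliary development ===== -/

/-- Admissibility with an integer "credit" `c`: every partial weight plus `c`
exceeds the index. `Adm 0` is exactly the convergence condition. -/
def Adm (c : ℤ) (l : List ℤ) : Prop :=
  ∀ j : ℕ, 1 ≤ j → j ≤ l.length → (j : ℤ) < c + (l.take j).sum

lemma adm_mono {c c' : ℤ} (h : c ≤ c') {l : List ℤ} (hl : Adm c l) : Adm c' l := by
  intro j h1 h2; have := hl j h1 h2; omega

lemma adm_cons {c x : ℤ} {l : List ℤ} : Adm c (x :: l) ↔ 1 < c + x ∧ Adm (c + x - 1) l := by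
  constructor
  · intro h
    constructor
    · have := h 1 le_rfl (by simp)
      simpa using this
    · intro j h1 h2
      have := h (j + 1) (by omega) (by simp; omega)
      rw [List.take_succ_cons, List.sum_cons] at this
      push_cast at this ⊢
      omega
  · rintro ⟨hx, hl⟩ j h1 h2
    cases j with
    | zero => omega
    | succ k =>
      rw [List.take_succ_cons, List.sum_cons]
      rcases Nat.eq_zero_or_pos k with h0 | hk
      · subst h0; simpa using hx
      · have h2' : k ≤ l.length := by simp at h2; omega
        have := hl k hk h2'
        push_cast at this ⊢
        omega

lemma hlift_bs (f : List ℤ → HZ) (l : List ℤ) : hlift f (bs l) = f l := by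
  simp [hlift, bs, Finsupp.lift_apply, Finsupp.sum_single_index]

lemma preZ_bs (l : List ℤ) : preZ (bs l) = bs (0 :: l) := by
  rw [preZ, hlift_bs]

lemma Imap_bs (x : ℤ) (r : List ℤ) : Imap (bs (x :: r)) = bs ((x + 1) :: r) := by
  rw [Imap, hlift_bs]

lemma Jmap_bs (x : ℤ) (r : List ℤ) : Jmap (bs (x :: r)) = bs ((x - 1) :: r) := by
  rw [Jmap, hlift_bs]

/-- Span of nonempty credit-`c` admissible symbols. -/
def SAdm (c : ℤ) : Submodule ℚ HZ :=
  Submodule.span ℚ {x : HZ | ∃ u : List ℤ, u ≠ [] ∧ Adm c u ∧ x = bs u}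

lemma bs_mem_SAdm {c : ℤ} {u : List ℤ} (h1 : u ≠ []) (h2 : Adm c u) : bs u ∈ SAdm c :=
  Submodule.subset_span ⟨u, h1, h2, rfl⟩

lemma SAdm_mono {c c' : ℤ} (h : c ≤ c') : SAdm c ≤ SAdm c' := by
  refine Submodule.span_le.mpr ?_
  rintro x ⟨u, h1, h2, rfl⟩
  exact bs_mem_SAdm h1 (adm_mono h h2)

lemma apply_span_le (F : HZ →ₗ[ℚ] HZ) (S : Set HZ) (p : Submodule ℚ HZ)
    (h : ∀ x ∈ S, F x ∈ p) {x : HZ} (hx : x ∈ Submodule.span ℚ S) : F x ∈ p := by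
  have h1 : Submodule.span ℚ S ≤ Submodule.comap F p :=
    Submodule.span_le.mpr fun y hy => h y hy
  exact h1 hx

lemma Imap_mem {c : ℤ} {x : HZ} (h : x ∈ SAdm c) : Imap x ∈ SAdm (c - 1) := by
  refine apply_span_le Imap _ _ ?_ h
  rintro y ⟨u, h1, h2, rfl⟩
  obtain ⟨a, r, rfl⟩ : ∃ a r, u = a :: r := by
    cases u with
    | nil => exact absurd rfl h1
    | cons a r => exact ⟨a, r, rfl⟩
  rw [Imap_bs]
  refine bs_mem_SAdm (by simp) ?_
  rw [adm_cons] at h2 ⊢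
  exact ⟨by omega, adm_mono (by omega) h2.2⟩

lemma Jmap_mem {c : ℤ} {x : HZ} (h : x ∈ SAdm c) : Jmap x ∈ SAdm (c + 1) := by
  refine apply_span_le Jmap _ _ ?_ h
  rintro y ⟨u, h1, h2, rfl⟩
  obtain ⟨a, r, rfl⟩ : ∃ a r, u = a :: r := by
    cases u with
    | nil => exact absurd rfl h1
    | cons a r => exact ⟨a, r, rfl⟩
  rw [Jmap_bs]
  refine bs_mem_SAdm (by simp) ?_
  rw [adm_cons] at h2 ⊢
  exact ⟨by omega, adm_mono (by omega) h2.2⟩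

lemma preZ_mem {c d : ℤ} {x : HZ} (hd : 2 ≤ d) (hcd : c ≤ d - 1) (h : x ∈ SAdm c) :
    preZ x ∈ SAdm d := by
  refine apply_span_le preZ _ _ ?_ h
  rintro y ⟨u, h1, h2, rfl⟩
  rw [preZ_bs]
  refine bs_mem_SAdm (by simp) ?_
  rw [adm_cons]
  exact ⟨by omega, adm_mono (by omega) h2⟩

/-- Primary part of the termination measure. -/
def Gm (s t : List ℤ) : ℕ :=
  s.length + t.length + (s.map Int.natAbs).sum + (t.map Int.natAbs).sum

/-- Termination measure for the extended shuffle recursion. -/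
def Tm (s t : List ℤ) : ℕ := Gm s t * Gm s t + s.headI.natAbs

lemma head_le_Gm (s t : List ℤ) : s.headI.natAbs ≤ Gm s t := by
  cases s with
  | nil => simp [Gm]
  | cons x r => simp only [Gm, List.headI, List.length_cons, List.map_cons, List.sum_cons]; omega

lemma Tm_lt {a b s t : List ℤ} (h1 : Gm a b ≤ Gm s t)
    (h2 : Gm a b < Gm s t ∨ a.headI.natAbs < s.headI.natAbs) : Tm a b < Tm s t := by
  have ha := head_le_Gm a b
  have hs := head_le_Gm s t
  rcases h2 with h | h
  · have h3 : (Gm a b + 1) * (Gm a b + 1) ≤ Gm s t * Gm s t := Nat.mul_le_mul h h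
    have h4 : Gm a b * Gm a b + 2 * Gm a b + 1 ≤ Gm s t * Gm s t := by
      have : (Gm a b + 1) * (Gm a b + 1) = Gm a b * Gm a b + 2 * Gm a b + 1 := by ring
      omega
    unfold Tm
    generalize Gm a b * Gm a b = A at h4 ⊢
    generalize Gm s t * Gm s t = B at h4 ⊢
    omega
  · have h3 : Gm a b * Gm a b ≤ Gm s t * Gm s t := Nat.mul_le_mul h1 h1
    unfold Tm
    omega

lemma Gm_pos {s : List ℤ} (t : List ℤ) (hs : s ≠ []) : 1 ≤ Gm s t := by
  cases s with
  | nil => exact absurd rfl hs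
  | cons x r => simp only [Gm, List.length_cons]; omega

/-- Main lemma: the extended shuffle product of two nonempty symbols admissible with
credits `c₁`, `c₂` lies in the span of symbols admissible with credit
`max (max c₁ c₂) (c₁ + c₂ - 1)`. -/
lemma main_aux (m : HZ →ₗ[ℚ] HZ →ₗ[ℚ] HZ) (hm : IsExtShuffle m) :
    ∀ n : ℕ, ∀ s t : List ℤ, Tm s t ≤ n → s ≠ [] → t ≠ [] →
    ∀ c₁ c₂ : ℤ, Adm c₁ s → Adm c₂ t →
    m (bs s) (bs t) ∈ SAdm (max (max c₁ c₂) (c₁ + c₂ - 1)) := by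
  obtain ⟨hu1, hu2, h3, h4, h5, h6, h7⟩ := hm
  intro n
  induction n with
  | zero =>
    intro s t hT hs ht
    exfalso
    have h1 : 1 ≤ Gm s t := Gm_pos t hs
    have h2 : 1 * 1 ≤ Gm s t * Gm s t := Nat.mul_le_mul h1 h1
    unfold Tm at hT
    omega
  | succ n IH =>
    intro s t hT hs ht c₁ c₂ a1 a2
    obtain ⟨s₁, s', rfl⟩ : ∃ a r, s = a :: r := by
      cases s with
      | nil => exact absurd rfl hs
      | cons a r => exact ⟨a, r, rfl⟩
    obtain ⟨t₁, t', rfl⟩ : ∃ a r, t = a :: r := by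
      cases t with
      | nil => exact absurd rfl ht
      | cons a r => exact ⟨a, r, rfl⟩
    have a1' := adm_cons.mp a1
    have a2' := adm_cons.mp a2
    rcases lt_trichotomy s₁ 0 with hs1 | hs1 | hs1
    · -- rule 7 : s₁ < 0
      rw [h7 s₁ hs1 t₁ s' t']
      have hc1 : 3 ≤ c₁ := by have := a1'.1; omega
      have key1 : Tm ((s₁ + 1) :: s') (t₁ :: t') ≤ n := by
        have := Tm_lt (a := (s₁ + 1) :: s') (b := t₁ :: t') (s := s₁ :: s') (t := t₁ :: t')
          (by simp only [Gm, List.length_cons, List.map_cons, List.sum_cons]; omega)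
          (Or.inl (by simp only [Gm, List.length_cons, List.map_cons, List.sum_cons]; omega))
        omega
      have key2 : Tm ((s₁ + 1) :: s') ((t₁ - 1) :: t') ≤ n := by
        have := Tm_lt (a := (s₁ + 1) :: s') (b := (t₁ - 1) :: t') (s := s₁ :: s') (t := t₁ :: t')
          (by simp only [Gm, List.length_cons, List.map_cons, List.sum_cons]; omega)
          (Or.inr (by simp only [List.headI]; omega))
        omega
      have ad1 : Adm (c₁ - 1) ((s₁ + 1) :: s') :=
        adm_cons.mpr ⟨by omega, adm_mono (by omega) a1'.2⟩
      have ad2 : Adm (c₂ + 1) ((t₁ - 1) :: t') :=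
        adm_cons.mpr ⟨by omega, adm_mono (by omega) a2'.2⟩
      have T1 := IH ((s₁ + 1) :: s') (t₁ :: t') key1 (by simp) (by simp) (c₁ - 1) c₂ ad1 a2
      have T2 := IH ((s₁ + 1) :: s') ((t₁ - 1) :: t') key2 (by simp) (by simp)
        (c₁ - 1) (c₂ + 1) ad1 ad2
      refine Submodule.sub_mem _ ?_ ?_
      · exact SAdm_mono (by omega) (Jmap_mem T1)
      · exact SAdm_mono (by omega) T2
    · -- rule 3 : s₁ = 0
      subst hs1
      rw [h3 s' t₁ t']
      have hc1 : 2 ≤ c₁ := by have := a1'.1; omega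
      cases s' with
      | nil =>
        rw [hu1, preZ_bs]
        refine bs_mem_SAdm (by simp) ?_
        rw [adm_cons]
        exact ⟨by omega, adm_mono (by omega) a2⟩
      | cons s₂ s'' =>
        have key : Tm (s₂ :: s'') (t₁ :: t') ≤ n := by
          have := Tm_lt (a := s₂ :: s'') (b := t₁ :: t') (s := 0 :: s₂ :: s'') (t := t₁ :: t')
            (by simp only [Gm, List.length_cons, List.map_cons, List.sum_cons]; omega)
            (Or.inl (by simp only [Gm, List.length_cons, List.map_cons, List.sum_cons]; omega))
          omega
        have T1 := IH (s₂ :: s'') (t₁ :: t') key (by simp) (by simp) (c₁ - 1) c₂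
          (adm_mono (by omega) a1'.2) a2
        exact preZ_mem (by omega) (by omega) T1
    · -- s₁ > 0
      rcases lt_trichotomy t₁ 0 with ht1 | ht1 | ht1
      · -- rule 6 : s₁ > 0, t₁ < 0
        rw [h6 s₁ t₁ hs1 ht1 s' t']
        have hc2 : 3 ≤ c₂ := by have := a2'.1; omega
        have key1 : Tm (s₁ :: s') ((t₁ + 1) :: t') ≤ n := by
          have := Tm_lt (a := s₁ :: s') (b := (t₁ + 1) :: t') (s := s₁ :: s') (t := t₁ :: t')
            (by simp only [Gm, List.length_cons, List.map_cons, List.sum_cons]; omega)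
            (Or.inl (by simp only [Gm, List.length_cons, List.map_cons, List.sum_cons]; omega))
          omega
        have key2 : Tm ((s₁ - 1) :: s') ((t₁ + 1) :: t') ≤ n := by
          have := Tm_lt (a := (s₁ - 1) :: s') (b := (t₁ + 1) :: t') (s := s₁ :: s') (t := t₁ :: t')
            (by simp only [Gm, List.length_cons, List.map_cons, List.sum_cons]; omega)
            (Or.inl (by simp only [Gm, List.length_cons, List.map_cons, List.sum_cons]; omega))
          omega
        have ad2 : Adm (c₂ - 1) ((t₁ + 1) :: t') :=
          adm_cons.mpr ⟨by omega, adm_mono (by omega) a2'.2⟩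
        have ad1 : Adm (c₁ + 1) ((s₁ - 1) :: s') :=
          adm_cons.mpr ⟨by omega, adm_mono (by omega) a1'.2⟩
        have T1 := IH (s₁ :: s') ((t₁ + 1) :: t') key1 (by simp) (by simp) c₁ (c₂ - 1) a1 ad2
        have T2 := IH ((s₁ - 1) :: s') ((t₁ + 1) :: t') key2 (by simp) (by simp)
          (c₁ + 1) (c₂ - 1) ad1 ad2
        refine Submodule.sub_mem _ ?_ ?_
        · exact SAdm_mono (by omega) (Jmap_mem T1)
        · exact SAdm_mono (by omega) T2
      · -- rule 4 : s₁ > 0, t₁ = 0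
        subst ht1
        rw [h4 s₁ hs1 s' t']
        have hc2 : 2 ≤ c₂ := by have := a2'.1; omega
        cases t' with
        | nil =>
          rw [hu2, preZ_bs]
          refine bs_mem_SAdm (by simp) ?_
          rw [adm_cons]
          exact ⟨by omega, adm_mono (by omega) a1⟩
        | cons t₂ t'' =>
          have key : Tm (s₁ :: s') (t₂ :: t'') ≤ n := by
            have := Tm_lt (a := s₁ :: s') (b := t₂ :: t'') (s := s₁ :: s') (t := 0 :: t₂ :: t'')
              (by simp only [Gm, List.length_cons, List.map_cons, List.sum_cons]; omega)
              (Or.inl (by simp only [Gm, List.length_cons, List.map_cons, List.sum_cons]; omega))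
            omega
          have T1 := IH (s₁ :: s') (t₂ :: t'') key (by simp) (by simp) c₁ (c₂ - 1)
            a1 (adm_mono (by omega) a2'.2)
          exact preZ_mem (by omega) (by omega) T1
      · -- rule 5 : s₁ > 0, t₁ > 0
        rw [h5 s₁ t₁ hs1 ht1 s' t']
        have key1 : Tm (s₁ :: s') ((t₁ - 1) :: t') ≤ n := by
          have := Tm_lt (a := s₁ :: s') (b := (t₁ - 1) :: t') (s := s₁ :: s') (t := t₁ :: t')
            (by simp only [Gm, List.length_cons, List.map_cons, List.sum_cons]; omega)
            (Or.inl (by simp only [Gm, List.length_cons, List.map_cons, List.sum_cons]; omega))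
          omega
        have key2 : Tm ((s₁ - 1) :: s') (t₁ :: t') ≤ n := by
          have := Tm_lt (a := (s₁ - 1) :: s') (b := t₁ :: t') (s := s₁ :: s') (t := t₁ :: t')
            (by simp only [Gm, List.length_cons, List.map_cons, List.sum_cons]; omega)
            (Or.inl (by simp only [Gm, List.length_cons, List.map_cons, List.sum_cons]; omega))
          omega
        have ad2 : Adm (c₂ + 1) ((t₁ - 1) :: t') :=
          adm_cons.mpr ⟨by omega, adm_mono (by omega) a2'.2⟩
        have ad1 : Adm (c₁ + 1) ((s₁ - 1) :: s') :=
          adm_cons.mpr ⟨by omega, adm_mono (by omega) a1'.2⟩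
        have T1 := IH (s₁ :: s') ((t₁ - 1) :: t') key1 (by simp) (by simp) c₁ (c₂ + 1) a1 ad2
        have T2 := IH ((s₁ - 1) :: s') (t₁ :: t') key2 (by simp) (by simp) (c₁ + 1) c₂ ad1 a2
        refine Submodule.add_mem _ ?_ ?_
        · exact SAdm_mono (by omega) (Imap_mem T1)
        · exact SAdm_mono (by omega) (Imap_mem T2)

lemma SAdm_le_Hconv : SAdm 0 ≤ Hconv := by
  refine Submodule.span_le.mpr ?_
  rintro x ⟨u, _, h2, rfl⟩
  exact Submodule.subset_span ⟨u, fun j hj hl => by have := h2 j hj hl; omega, rfl⟩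

lemma bs_mem_Hconv {l : List ℤ}
    (h : ∀ j : ℕ, 1 ≤ j → j ≤ l.length → (j : ℤ) < (l.take j).sum) : bs l ∈ Hconv :=
  Submodule.subset_span ⟨l, h, rfl⟩

/-- `(ℋ⁰_ℤ, ⧢)` is a unital subalgebra of `(ℋ_ℤ, ⧢)`. -/
theorem Hconv_subalgebra (m : HZ →ₗ[ℚ] HZ →ₗ[ℚ] HZ) (hm : IsExtShuffle m) :
    bs [] ∈ Hconv ∧ ∀ a ∈ Hconv, ∀ b ∈ Hconv, m a b ∈ Hconv := by
  constructor
  · exact bs_mem_Hconv (fun j h1 h2 => by simp at h2; omega)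
  · intro a ha b hb
    have hflip : m a b = m.flip b a := rfl
    rw [hflip]
    refine apply_span_le (m.flip b) _ Hconv ?_ ha
    rintro x ⟨s, hsadm, rfl⟩
    simp only [LinearMap.flip_apply]
    refine apply_span_le (m (bs s)) _ Hconv ?_ hb
    rintro y ⟨t, htadm, rfl⟩
    cases s with
    | nil => rw [hm.1]; exact bs_mem_Hconv htadm
    | cons s₁ s' =>
      cases t with
      | nil => rw [hm.2.1]; exact bs_mem_Hconv hsadm
      | cons t₁ t' =>
        have h0s : Adm 0 (s₁ :: s') := fun j h1 h2 => by have := hsadm j h1 h2; omega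
        have h0t : Adm 0 (t₁ :: t') := fun j h1 h2 => by have := htadm j h1 h2; omega
        have := main_aux m hm (Tm (s₁ :: s') (t₁ :: t')) _ _ le_rfl (by simp) (by simp)
          0 0 h0s h0t
        have he : max (max (0 : ℤ) 0) (0 + 0 - 1) = 0 := by norm_num
        rw [he] at this
        exact SAdm_le_Hconv this
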